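/- arXiv:1811.06023 — 4 statements merged into one kernel-verified Lean document; each statement's English description precedes it below -/
import Mathlib

section
/- Let S ⊆ ℝ≥0 be a set of distances such that every triple in S satisfying the triangle inequalities can be realized and amalgamated within S (S satisfies the 4-values condition, equivalently the finite metric spaces with distances in S have the amalgamation property). Let A and B be finite metric spaces with distances in S agreeing on A ∩ B (an amalgamation instance). Suppose there exists s ∈ S such that s ≤ d_A(a,x) + d_B(x,b) for all a ∈ A \ B, x ∈ A ∩ B, b ∈ B \ A. Then there exists an amalgam C on A ∪ B, with all distances in S, restricting to A on A and to B on B, such that d_C(a,b) ≥ s for all a ∈ A \ B and b ∈ B \ A. -/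
/-- `d` is a metric on the finite set `A` with all distances belonging to `S`. -/
def IsMetricOn (d : ℕ → ℕ → ℝ) (A : Finset ℕ) (S : Set ℝ) : Prop :=
  (∀ x ∈ A, d x x = 0) ∧
  (∀ x ∈ A, ∀ y ∈ A, d x y = d y x) ∧
  (∀ x ∈ A, ∀ y ∈ A, x ≠ y → 0 < d x y) ∧
  (∀ x ∈ A, ∀ y ∈ A, ∀ z ∈ A, d x z ≤ d x y + d y z) ∧
  (∀ x ∈ A, ∀ y ∈ A, d x y ∈ S)

theorem stmt6 (S : Set ℝ) (hS : S ⊆ Set.Ici (0:ℝ)) (h0 : (0:ℝ) ∈ S)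
    -- S has the amalgamation property for finite metric spaces with distances in S:
    (hamalg : ∀ (A B : Finset ℕ) (dA dB : ℕ → ℕ → ℝ),
      IsMetricOn dA A S → IsMetricOn dB B S →
      (∀ x ∈ A ∩ B, ∀ y ∈ A ∩ B, dA x y = dB x y) →
      ∃ dC : ℕ → ℕ → ℝ, IsMetricOn dC (A ∪ B) S ∧
        (∀ x ∈ A, ∀ y ∈ A, dC x y = dA x y) ∧
        (∀ x ∈ B, ∀ y ∈ B, dC x y = dB x y))
    (A B : Finset ℕ) (dA dB : ℕ → ℕ → ℝ)
    (hA : IsMetricOn dA A S) (hB : IsMetricOn dB B S)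
    (hagree : ∀ x ∈ A ∩ B, ∀ y ∈ A ∩ B, dA x y = dB x y)
    (s : ℝ) (hsS : s ∈ S)
    (hbound : ∀ a ∈ A \ B, ∀ x ∈ A ∩ B, ∀ b ∈ B \ A, s ≤ dA a x + dB x b) :
    ∃ dC : ℕ → ℕ → ℝ, IsMetricOn dC (A ∪ B) S ∧
      (∀ x ∈ A, ∀ y ∈ A, dC x y = dA x y) ∧
      (∀ x ∈ B, ∀ y ∈ B, dC x y = dB x y) ∧
      (∀ a ∈ A \ B, ∀ b ∈ B \ A, s ≤ dC a b) := by
  classical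
  obtain ⟨dD, ⟨hd0, hsym, hpos, htri, hmem⟩, hDA, hDB⟩ := hamalg A B dA dB hA hB hagree
  have hs0 : 0 ≤ s := hS hsS
  have hnn : ∀ x ∈ A ∪ B, ∀ y ∈ A ∪ B, 0 ≤ dD x y := fun x hx y hy => hS (hmem x hx y hy)
  set cross : ℕ → ℕ → Prop :=
    fun x y => (x ∈ A \ B ∧ y ∈ B \ A) ∨ (x ∈ B \ A ∧ y ∈ A \ B) with hcrossdef
  have crossSymm : ∀ x y, cross x y → cross y x := by
    rintro x y (⟨h1, h2⟩ | ⟨h1, h2⟩)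
    · exact Or.inr ⟨h2, h1⟩
    · exact Or.inl ⟨h2, h1⟩
  set dC : ℕ → ℕ → ℝ := fun x y => if cross x y then max (dD x y) s else dD x y with hdCdef
  have hCge : ∀ x y, dD x y ≤ dC x y := by
    intro x y
    by_cases h : cross x y <;> simp [hdCdef, h]
  have hCnn : ∀ x ∈ A ∪ B, ∀ y ∈ A ∪ B, 0 ≤ dC x y :=
    fun x hx y hy => (hnn x hx y hy).trans (hCge x y)
  have hCcross : ∀ x y, cross x y → s ≤ dC x y := by
    intro x y h; simp [hdCdef, h]
  refine ⟨dC, ⟨?_, ?_, ?_, ?_, ?_⟩, ?_, ?_, ?_⟩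
  · intro x hx
    have hnc : ¬ cross x x := by
      rintro (⟨h1, h2⟩ | ⟨h1, h2⟩) <;>
        exact (Finset.mem_sdiff.1 h1).2 (Finset.mem_sdiff.1 h2).1
    simp [hdCdef, hnc, hd0 x hx]
  · intro x hx y hy
    by_cases h : cross x y
    · simp [hdCdef, h, crossSymm x y h, hsym x hx y hy]
    · have h' : ¬ cross y x := fun h'' => h (crossSymm y x h'')
      simp [hdCdef, h, h', hsym x hx y hy]
  · intro x hx y hy hxy
    exact lt_of_lt_of_le (hpos x hx y hy hxy) (hCge x y)
  · intro x hx y hy z hz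
    have hd : dD x z ≤ dC x y + dC y z :=
      (htri x hx y hy z hz).trans (add_le_add (hCge x y) (hCge y z))
    by_cases h : cross x z
    · have hs' : s ≤ dC x y + dC y z := by
        by_cases hyAB : y ∈ A ∩ B
        · rcases h with ⟨h1, h2⟩ | ⟨h1, h2⟩
          · have hb := hbound x h1 y hyAB z h2
            have hx' : dD x y = dA x y :=
              hDA x (Finset.mem_sdiff.1 h1).1 y (Finset.mem_inter.1 hyAB).1
            have hz' : dD y z = dB y z :=
              hDB y (Finset.mem_inter.1 hyAB).2 z (Finset.mem_sdiff.1 h2).1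
            calc s ≤ dA x y + dB y z := hb
              _ = dD x y + dD y z := by rw [hx', hz']
              _ ≤ dC x y + dC y z := add_le_add (hCge x y) (hCge y z)
          · have hb := hbound z h2 y hyAB x h1
            have hz' : dD z y = dA z y :=
              hDA z (Finset.mem_sdiff.1 h2).1 y (Finset.mem_inter.1 hyAB).1
            have hx' : dD y x = dB y x :=
              hDB y (Finset.mem_inter.1 hyAB).2 x (Finset.mem_sdiff.1 h1).1
            calc s ≤ dA z y + dB y x := hb
              _ = dD z y + dD y x := by rw [hz', hx']
              _ = dD x y + dD y z := by
                  rw [hsym z hz y hy, hsym y hy x hx, add_comm]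
              _ ≤ dC x y + dC y z := add_le_add (hCge x y) (hCge y z)
        · have hy' : y ∈ A \ B ∨ y ∈ B \ A := by
            rcases Finset.mem_union.1 hy with h' | h'
            · exact Or.inl (Finset.mem_sdiff.2 ⟨h', fun hb =>
                hyAB (Finset.mem_inter.2 ⟨h', hb⟩)⟩)
            · exact Or.inr (Finset.mem_sdiff.2 ⟨h', fun ha =>
                hyAB (Finset.mem_inter.2 ⟨ha, h'⟩)⟩)
          rcases h with ⟨h1, h2⟩ | ⟨h1, h2⟩ <;> rcases hy' with hy' | hy'
          · have : s ≤ dC y z := hCcross y z (Or.inl ⟨hy', h2⟩)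
            linarith [hCnn x hx y hy]
          · have : s ≤ dC x y := hCcross x y (Or.inl ⟨h1, hy'⟩)
            linarith [hCnn y hy z hz]
          · have : s ≤ dC x y := hCcross x y (Or.inr ⟨h1, hy'⟩)
            linarith [hCnn y hy z hz]
          · have : s ≤ dC y z := hCcross y z (Or.inr ⟨hy', h2⟩)
            linarith [hCnn x hx y hy]
      have : dC x z = max (dD x z) s := by simp [hdCdef, h]
      rw [this]
      exact max_le hd hs'
    · have : dC x z = dD x z := by simp [hdCdef, h]
      rw [this]; exact hd
  · intro x hx y hy
    by_cases h : cross x y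
    · have : dC x y = max (dD x y) s := by simp [hdCdef, h]
      rw [this]
      rcases le_total (dD x y) s with h' | h'
      · rw [max_eq_right h']; exact hsS
      · rw [max_eq_left h']; exact hmem x hx y hy
    · have : dC x y = dD x y := by simp [hdCdef, h]
      rw [this]; exact hmem x hx y hy
  · intro x hx y hy
    have hnc : ¬ cross x y := by
      rintro (⟨h1, h2⟩ | ⟨h1, h2⟩)
      · exact (Finset.mem_sdiff.1 h2).2 hy
      · exact (Finset.mem_sdiff.1 h1).2 hx
    have : dC x y = dD x y := by simp [hdCdef, hnc]
    rw [this]; exact hDA x hx y hy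
  · intro x hx y hy
    have hnc : ¬ cross x y := by
      rintro (⟨h1, h2⟩ | ⟨h1, h2⟩)
      · exact (Finset.mem_sdiff.1 h1).2 hx
      · exact (Finset.mem_sdiff.1 h2).2 hy
    have : dC x y = dD x y := by simp [hdCdef, hnc]
    rw [this]; exact hDB x hx y hy
  · intro a ha b hb
    exact hCcross a b (Or.inl ⟨ha, hb⟩)
end

section
/- Let S ⊆ ℝ≥0 be a universal spectrum without positive limit points (no positive real is a limit point of S), satisfying the 4-values condition. Let r < t be consecutive elements of S (no element of S lies strictly between them) with r + r ≥ t, and let c = min { s ∈ S : t - r ≤ s } be the cover of {r,t}. Then c is an initial number of S, i.e., [c/2, c) ∩ S = ∅. -/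
/-- A triple of side lengths is metric. -/
def MetricTriple (a b c : ℝ) : Prop := a ≤ b + c ∧ b ≤ a + c ∧ c ≤ a + b

/-- The 4-values condition: metric triangles with distances in `S` sharing an edge
amalgamate within `S`. -/
def FourValues (S : Set ℝ) : Prop :=
  ∀ a ∈ S, ∀ b ∈ S, ∀ c ∈ S, ∀ b' ∈ S, ∀ c' ∈ S,
    MetricTriple a b c → MetricTriple a b' c' →
    ∃ e ∈ S, MetricTriple b b' e ∧ MetricTriple c c' e

theorem stmt8 (S : Set ℝ) (hS : S ⊆ Set.Ici (0:ℝ)) (h0 : (0:ℝ) ∈ S)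
    (hpos : ∃ x ∈ S, 0 < x) (h4v : FourValues S)
    -- no positive limit points:
    (hnoposlim : ∀ r : ℝ, 0 < r → ∃ ε > 0, ∀ t ∈ S, t ≠ r → ε ≤ |t - r|)
    (r t : ℝ) (hr : r ∈ S) (ht : t ∈ S) (hrt : r < t)
    (hconsec : ∀ u ∈ S, ¬ (r < u ∧ u < t))
    (hrr : t ≤ r + r)
    (c : ℝ) (hc : IsLeast {u : ℝ | u ∈ S ∧ t - r ≤ u} c) :
    -- c is an initial number of S:
    ∀ u ∈ S, ¬ (c / 2 ≤ u ∧ u < c) := by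
  rintro u hu ⟨hu1, hu2⟩
  have hr0 : (0:ℝ) ≤ r := hS hr
  have hcS : c ∈ S := hc.1.1
  have hctr : t - r ≤ c := hc.1.2
  have hct : c ≤ t := hc.2 ⟨ht, by linarith⟩
  -- u < t - r, since otherwise c ≤ u
  have hutr : u < t - r := by
    by_contra h
    exact absurd (hc.2 ⟨hu, le_of_not_gt h⟩) (not_le.mpr hu2)
  have hT1 : MetricTriple c r t := by
    refine ⟨by linarith, by linarith, by linarith⟩
  have hT2 : MetricTriple c u u := by
    have hu0 : (0:ℝ) ≤ u := hS hu
    refine ⟨by linarith, by linarith, by linarith⟩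
  obtain ⟨e, heS, ⟨_, _, _⟩, ⟨h1, h2, _⟩⟩ :=
    h4v c hcS r hr t ht u hu u hu hT1 hT2
  exact hconsec e heS ⟨by linarith, by linarith⟩
end

section
/- Let S ⊆ ℝ≥0 be a universal spectrum (containing 0 and a positive number, satisfying the 4-values condition) without positive limit points. If 0 is a limit point of S, then 0 is also a limit point of the set of initial numbers of S and a limit point of the set of jump numbers of S; in particular S contains arbitrarily small positive initial numbers and arbitrarily small positive jump numbers. -/
/-- `s` is an initial number of `S`: `[s/2, s) ∩ S = ∅`. -/
def Initial (S : Set ℝ) (s : ℝ) : Prop := ∀ u ∈ S, ¬ (s / 2 ≤ u ∧ u < s)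

/-- `s` is a jump number of `S`: `(s, 2s] ∩ S = ∅`. -/
def Jump (S : Set ℝ) (s : ℝ) : Prop := ∀ u ∈ S, ¬ (s < u ∧ u ≤ 2 * s)

/-- A set of reals with no positive accumulation point meets any `Icc a b`, `0 < a`,
in a finite set. -/
lemma aux_finite (S : Set ℝ)
    (hnoposlim : ∀ r : ℝ, 0 < r → ∃ ε > 0, ∀ t ∈ S, t ≠ r → ε ≤ |t - r|)
    {a b : ℝ} (ha : 0 < a) : (S ∩ Set.Icc a b).Finite := by
  by_contra hinf
  rw [← Set.not_infinite, not_not] at hinf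
  obtain ⟨x, hxK, hx⟩ := hinf.exists_accPt_of_subset_isCompact isCompact_Icc
    Set.inter_subset_right
  have hxpos : 0 < x := lt_of_lt_of_le ha hxK.1
  obtain ⟨ε, hε, hsep⟩ := hnoposlim x hxpos
  rw [accPt_iff_nhds] at hx
  obtain ⟨y, ⟨hy1, hy2⟩, hyne⟩ := hx (Metric.ball x ε) (Metric.ball_mem_nhds x hε)
  have := hsep y hy2.1 hyne
  rw [Metric.mem_ball, Real.dist_eq] at hy1
  linarith

/-- Core lemma: arbitrarily small jump numbers exist. -/
lemma aux_jump (S : Set ℝ) (hS : S ⊆ Set.Ici (0:ℝ)) (h4v : FourValues S)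
    (hnoposlim : ∀ r : ℝ, 0 < r → ∃ ε > 0, ∀ t ∈ S, t ≠ r → ε ≤ |t - r|)
    (h0lim : ∀ ε > 0, ∃ t ∈ S, 0 < t ∧ t < ε) :
    ∀ ε > 0, ∃ s ∈ S, 0 < s ∧ s < ε ∧ Jump S s := by
  intro ε hε
  by_contra hc
  push_neg at hc
  -- hc : ∀ s ∈ S, 0 < s → s < ε → ¬ Jump S s
  have hnj : ∀ s ∈ S, 0 < s → s < ε → ∃ u ∈ S, s < u ∧ u ≤ 2 * s := by
    intro s hs h1 h2
    have := hc s hs h1 h2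
    unfold Jump at this
    push_neg at this
    exact this
  -- small element x₀
  obtain ⟨x₀, hx₀S, hx₀pos, hx₀lt⟩ := h0lim (ε/2) (by linarith)
  -- successor z of x₀
  obtain ⟨u₁, hu₁S, hu₁gt, hu₁le⟩ := hnj x₀ hx₀S hx₀pos (by linarith)
  have hfin : (S ∩ Set.Icc x₀ (2*x₀)).Finite := aux_finite S hnoposlim hx₀pos
  have hfin' : (S ∩ Set.Ioc x₀ (2*x₀)).Finite :=
    hfin.subset (by intro u hu; exact ⟨hu.1, le_of_lt hu.2.1, hu.2.2⟩)
  obtain ⟨z, hzmem, hzmin⟩ := Set.exists_min_image _ id hfin' ⟨u₁, hu₁S, hu₁gt, hu₁le⟩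
  obtain ⟨hzS, hzgt, hzle⟩ := hzmem
  -- gap: no element of S in (x₀, z)
  have hgap : ∀ u ∈ S, x₀ < u → u < z → False := by
    intro u huS h1 h2
    have : z ≤ u := hzmin u ⟨huS, h1, le_trans (le_of_lt h2) hzle⟩
    linarith
  set g := z - x₀ with hg
  have hgpos : 0 < g := by rw [hg]; linarith
  -- m = largest element of S in (0, g)
  obtain ⟨q, hqS, hqpos, hqlt⟩ := h0lim g hgpos
  have hfin2 : (S ∩ Set.Icc q g).Finite := aux_finite S hnoposlim hqpos
  have hfin2' : (S ∩ Set.Ico q g).Finite :=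
    hfin2.subset (by intro u hu; exact ⟨hu.1, hu.2.1, le_of_lt hu.2.2⟩)
  obtain ⟨m, hmmem, hmmax⟩ := Set.exists_max_image _ id hfin2' ⟨q, hqS, le_refl q, hqlt⟩
  obtain ⟨hmS, hmge, hmlt⟩ := hmmem
  have hmmax' : ∀ u ∈ S, 0 < u → u < g → u ≤ m := by
    intro u huS h1 h2
    rcases le_or_gt q u with h | h
    · exact hmmax u ⟨huS, h, h2⟩
    · linarith
  have hmpos : 0 < m := lt_of_lt_of_le hqpos hmge
  -- t ∈ S with m < t ≤ 2m, and then g ≤ t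
  obtain ⟨t, htS, htgt, htle⟩ := hnj m hmS hmpos (by linarith)
  have htg : g ≤ t := by
    by_contra h
    push_neg at h
    have := hmmax' t htS (lt_trans hmpos htgt) h
    linarith
  -- apply the 4-values condition
  have T1 : MetricTriple t z x₀ := by
    refine ⟨by linarith, by linarith, by linarith⟩
  have T2 : MetricTriple t m m := ⟨by linarith, by linarith, by linarith⟩
  obtain ⟨e, heS, he1, he2⟩ := h4v t htS z hzS x₀ hx₀S m hmS m hmS T1 T2
  -- e ∈ (x₀, z) ∩ S : contradiction
  have hegt : x₀ < e := by have h := he1.1; rw [hg] at hmlt; linarith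
  have helt : e < z := by have h := he2.2.2; linarith
  exact hgap e heS hegt helt

theorem stmt9 (S : Set ℝ) (hS : S ⊆ Set.Ici (0:ℝ)) (h0 : (0:ℝ) ∈ S)
    (hpos : ∃ x ∈ S, 0 < x) (h4v : FourValues S)
    (hnoposlim : ∀ r : ℝ, 0 < r → ∃ ε > 0, ∀ t ∈ S, t ≠ r → ε ≤ |t - r|)
    (h0lim : ∀ ε > 0, ∃ t ∈ S, 0 < t ∧ t < ε) :
    (∀ ε > 0, ∃ s ∈ S, 0 < s ∧ s < ε ∧ Initial S s) ∧
    (∀ ε > 0, ∃ s ∈ S, 0 < s ∧ s < ε ∧ Jump S s) := by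
  have hjump := aux_jump S hS h4v hnoposlim h0lim
  constructor
  · -- initial numbers from jump numbers
    intro ε hε
    obtain ⟨t, htS, htpos, htlt⟩ := h0lim ε hε
    obtain ⟨s, hsS, hspos, hslt, hsjump⟩ := hjump t htpos
    -- y = least element of S in (s, t]
    have hfin : (S ∩ Set.Icc s t).Finite := aux_finite S hnoposlim hspos
    have hfin' : (S ∩ Set.Ioc s t).Finite :=
      hfin.subset (by intro u hu; exact ⟨hu.1, le_of_lt hu.2.1, hu.2.2⟩)
    obtain ⟨y, hymem, hymin⟩ := Set.exists_min_image _ id hfin'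
      ⟨t, htS, hslt, le_refl t⟩
    obtain ⟨hyS, hygt, hyle⟩ := hymem
    have hy2s : 2 * s < y := by
      by_contra h
      push_neg at h
      exact hsjump y hyS ⟨hygt, h⟩
    refine ⟨y, hyS, lt_trans hspos hygt, lt_of_le_of_lt hyle htlt, ?_⟩
    intro u huS ⟨h1, h2⟩
    have hus : s < u := by linarith
    have hut : u ≤ t := le_trans (le_of_lt h2) hyle
    have := hymin u ⟨huS, hus, hut⟩
    simp only [id] at this
    linarith
  · exact hjump
end

section
/- Let S ⊆ ℝ≥0 contain 0 with p = min(S ∩ ℝ>0) existing, and suppose p is a jump number ((p,2p] ∩ S = ∅) and b - a > p for all a < b in S with a > 0. Let U be a countable metric space with distances in S that is universal for finite metric spaces with distances in S and homogeneous. Then for every finite coloring γ: U → n, there exists a non-identity automorphism of U preserving γ. Hence the distinguishing number of U is infinite. -/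
theorem stmt10 (S : Set ℝ) (hS : S ⊆ Set.Ici (0:ℝ)) (h0 : (0:ℝ) ∈ S)
    (p : ℝ) (hp : IsLeast {x : ℝ | x ∈ S ∧ 0 < x} p)
    -- p is a jump number:
    (hjump : ∀ u ∈ S, ¬ (p < u ∧ u ≤ 2 * p))
    -- any two distinct positive elements of S differ by more than p:
    (hgapbig : ∀ a ∈ S, ∀ b ∈ S, 0 < a → a < b → p < b - a)
    (U : Type) [MetricSpace U] [Countable U]
    (hspec : ∀ x y : U, dist x y ∈ S)
    -- universality for finite metric spaces with distances in S:
    (huniv : ∀ (n : ℕ) (d : Fin n → Fin n → ℝ),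
      (∀ i, d i i = 0) → (∀ i j, d i j = d j i) →
      (∀ i j, i ≠ j → 0 < d i j) →
      (∀ i j k, d i k ≤ d i j + d j k) →
      (∀ i j, d i j ∈ S) →
      ∃ e : Fin n → U, ∀ i j, dist (e i) (e j) = d i j)
    -- homogeneity: every isometry between finite subspaces extends to a self-isometry:
    (hhomog : ∀ (A : Finset U) (f : U → U),
      (∀ x ∈ A, ∀ y ∈ A, dist (f x) (f y) = dist x y) →
      ∃ g : U ≃ᵢ U, ∀ x ∈ A, g x = f x) :
    ∀ (n : ℕ) (γ : U → Fin n),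
      ∃ g : U ≃ᵢ U, (∀ x : U, γ (g x) = γ x) ∧ ∃ x : U, g x ≠ x := by
  intro n γ
  letI : DecidableEq U := Classical.decEq U
  have hp0 : 0 < p := hp.1.2
  have hpS : p ∈ S := hp.1.1
  obtain ⟨e, he⟩ := huniv (n + 1) (fun i j => if i = j then 0 else p)
    (fun i => by simp)
    (fun i j => by
      by_cases h : i = j
      · simp [h]
      · simp [h, Ne.symm h])
    (fun i j hij => by simpa [hij] using hp0)
    (fun i j k => by
      rcases eq_or_ne i j with rfl | h1
      · simp
      · rcases eq_or_ne j k with rfl | h2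
        · simp
        · rcases eq_or_ne i k with rfl | h3
          · simp [h1, h2]; linarith
          · simp [h1, h2, h3]; linarith)
    (fun i j => by
      by_cases h : i = j
      · simp [h, h0]
      · simp [h, hpS])
  obtain ⟨i, j, hij, hcol⟩ :=
    Fintype.exists_ne_map_eq_of_card_lt (fun i : Fin (n + 1) => γ (e i)) (by simp)
  set x := e i with hx
  set y := e j with hy
  have hxy : dist x y = p := by rw [he]; simp [hij]
  have hxyne : x ≠ y := by
    intro h
    rw [h, dist_self] at hxy
    linarith
  have hkey : ∀ z : U, z ≠ x → z ≠ y → dist z x = dist z y := by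
    intro z hzx hzy
    by_contra hne
    have haS := hspec z x
    have hbS := hspec z y
    have ha0 : 0 < dist z x := dist_pos.mpr hzx
    have hb0 : 0 < dist z y := dist_pos.mpr hzy
    rcases lt_or_gt_of_ne hne with h | h
    · have h1 := hgapbig _ haS _ hbS ha0 h
      have h2 : dist z y ≤ dist z x + p := by
        rw [← hxy]; exact dist_triangle z x y
      linarith
    · have h1 := hgapbig _ hbS _ haS hb0 h
      have h2 : dist z x ≤ dist z y + p := by
        have : dist y x = p := by rw [dist_comm]; exact hxy
        rw [← this]; exact dist_triangle z y x
      linarith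
  have hsw : ∀ z w : U, dist (Equiv.swap x y z) (Equiv.swap x y w) = dist z w := by
    intro z w
    rcases eq_or_ne z x with rfl | hzx
    · rcases eq_or_ne w x with rfl | hwx
      · simp
      · rcases eq_or_ne w y with rfl | hwy
        · rw [Equiv.swap_apply_left, Equiv.swap_apply_right, dist_comm]
        · rw [Equiv.swap_apply_left, Equiv.swap_apply_of_ne_of_ne hwx hwy,
            dist_comm y w, dist_comm x w, hkey w hwx hwy]
    · rcases eq_or_ne z y with rfl | hzy
      · rcases eq_or_ne w x with rfl | hwx
        · rw [Equiv.swap_apply_left, Equiv.swap_apply_right, dist_comm]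
        · rcases eq_or_ne w y with rfl | hwy
          · simp
          · rw [Equiv.swap_apply_right, Equiv.swap_apply_of_ne_of_ne hwx hwy,
              dist_comm x w, dist_comm y w, ← hkey w hwx hwy]
      · rw [Equiv.swap_apply_of_ne_of_ne hzx hzy]
        rcases eq_or_ne w x with rfl | hwx
        · rw [Equiv.swap_apply_left, hkey z hzx hzy]
        · rcases eq_or_ne w y with rfl | hwy
          · rw [Equiv.swap_apply_right, ← hkey z hzx hzy]
          · rw [Equiv.swap_apply_of_ne_of_ne hwx hwy]
  refine ⟨⟨Equiv.swap x y, Isometry.of_dist_eq hsw⟩, ?_, ⟨x, ?_⟩⟩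
  · intro z
    rcases eq_or_ne z x with rfl | hzx
    · simpa [Equiv.swap_apply_left] using hcol.symm
    · rcases eq_or_ne z y with rfl | hzy
      · simpa [Equiv.swap_apply_right] using hcol
      · simp [Equiv.swap_apply_of_ne_of_ne hzx hzy]
  · simpa [Equiv.swap_apply_left] using (Ne.symm hxyne)
end
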